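/- If (ξ₁,ξ₂,ξ₃) solves ξ̇₁ = -ξ₂, ξ̇₂ = ξ₁ + ξ₃ cos(μt), ξ̇₃ = -ξ₂ cos(μt) on the unit sphere ξ₁²+ξ₂²+ξ₃² = 1 with ξ₁ - iξ₂ ≠ 0 and ξ₃ + 1 ≠ 0, then both u₁ = (ξ₃+1)/(ξ₁ - iξ₂) and u₂ = -(ξ₁ + iξ₂)/(ξ₃+1) satisfy the Riccati equation u̇ = -(i/2)cos(μt) + i u + (i/2)cos(μt) u². -/

import Mathlib

/-!
Writing `u = N / D`, the quotient rule shows that `u` solves `u' = a + b u + c u²` as soon as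
`N' D - N D' = a D² + b N D + c N²`. For both quotients `u₁` and `u₂` this identity is a
polynomial consequence of the variational equations and of the sphere relation.
-/

open Complex

theorem HasDerivAt.div_of_riccati {𝕜 𝕜' : Type*} [NontriviallyNormedField 𝕜]
    [NontriviallyNormedField 𝕜'] [NormedAlgebra 𝕜 𝕜'] {N D : 𝕜 → 𝕜'} {N' D' a b c : 𝕜'} {x : 𝕜}
    (hN : HasDerivAt N N' x) (hD : HasDerivAt D D' x) (hx : D x ≠ 0)
    (h : N' * D x - N x * D' = a * D x ^ 2 + b * N x * D x + c * N x ^ 2) :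
    HasDerivAt (fun y => N y / D y) (a + b * (N x / D x) + c * (N x / D x) ^ 2) x :=
  (hN.div hD hx).congr_deriv (by field_simp; linear_combination h)

theorem sphere_reduction_Riccati (μ : ℝ) (ξ₁ ξ₂ ξ₃ : ℝ → ℂ)
    (h1 : ∀ t, HasDerivAt ξ₁ (-(ξ₂ t)) t)
    (h2 : ∀ t, HasDerivAt ξ₂ (ξ₁ t + ξ₃ t * Complex.cos (μ * t)) t)
    (h3 : ∀ t, HasDerivAt ξ₃ (-(ξ₂ t) * Complex.cos (μ * t)) t)
    (hsphere : ∀ t, ξ₁ t ^ 2 + ξ₂ t ^ 2 + ξ₃ t ^ 2 = 1)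
    (hden1 : ∀ t, ξ₁ t - I * ξ₂ t ≠ 0)
    (hden2 : ∀ t, ξ₃ t + 1 ≠ 0) :
    ∀ t : ℝ,
      (HasDerivAt (fun s => (ξ₃ s + 1) / (ξ₁ s - I * ξ₂ s))
        (-(I/2) * Complex.cos (μ * t) + I * ((ξ₃ t + 1) / (ξ₁ t - I * ξ₂ t))
          + (I/2) * Complex.cos (μ * t) * ((ξ₃ t + 1) / (ξ₁ t - I * ξ₂ t)) ^ 2) t) ∧
      (HasDerivAt (fun s => -((ξ₁ s + I * ξ₂ s) / (ξ₃ s + 1)))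
        (-(I/2) * Complex.cos (μ * t) + I * (-((ξ₁ t + I * ξ₂ t) / (ξ₃ t + 1)))
          + (I/2) * Complex.cos (μ * t) * (-((ξ₁ t + I * ξ₂ t) / (ξ₃ t + 1))) ^ 2) t) := by
  intro t
  set C := Complex.cos (μ * t)
  have hN₃ : HasDerivAt (fun s => ξ₃ s + 1) (-(ξ₂ t) * C) t := (h3 t).add_const 1
  constructor
  · refine hN₃.div_of_riccati ((h1 t).sub ((h2 t).const_mul I)) (hden1 t) ?_
    linear_combination (I * C / 2) * hsphere t
      + ξ₂ t * (1 + ξ₃ t - C * ξ₁ t + I / 2 * C * ξ₂ t) * I_sq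
  · have hN₁₂ : HasDerivAt (fun s => -(ξ₁ s + I * ξ₂ s))
        (-(-(ξ₂ t) + I * (ξ₁ t + ξ₃ t * C))) t :=
      ((h1 t).add ((h2 t).const_mul I)).neg
    have hu₂ := hN₁₂.div_of_riccati hN₃ (hden2 t)
      (a := -(I / 2) * C) (b := I) (c := (I / 2) * C)
      (by linear_combination (-(I * C / 2)) * hsphere t
        + ξ₂ t * (1 + ξ₃ t - C * ξ₁ t - I / 2 * C * ξ₂ t) * I_sq)
    simpa only [neg_div] using hu₂
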